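/- arXiv:1507.02087 — 8 statements merged into one kernel-verified Lean document; each statement's English description precedes it below -/
import Mathlib

section
/- Let f : [0,1] → [0,1] be continuous and q > 0 be such that the limits of (f(x) − f(x)²)/(x − x²)^q as x → 0⁺ and as x → 1⁻ exist. Then for every Hermitian matrix X with all eigenvalues in [0,1] and X ≠ X², the ratio ‖f(X) − f(X)²‖₂ / ‖X − X²‖₂^q is at most sup over x ∈ (0,1) of (f(x) − f(x)²)/(x − x²)^q (where the function is extended by continuity at 0 and 1). -/
/-! The endpoint limits force `f x - f x ^ 2` to vanish at `0` and `1` and keep the ratio bounded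
on `(0, 1)`, so with `C` its supremum, `f x - f x ^ 2 ≤ C * (x - x ^ 2) ^ q` on `[0, 1]`.
Both `f(X) - f(X)²` and `X - X²` come from the continuous functional calculus of `X`, whose norm
is the largest modulus over the spectrum `⊆ [0, 1]`; the scalar inequality at each eigenvalue and
monotonicity of `t ↦ t ^ q` give the bound. -/

open Matrix Set Filter

noncomputable def specNorm {n : ℕ} (A : Matrix (Fin n) (Fin n) ℂ) : ℝ :=
  ‖(Matrix.toEuclideanLin A).toContinuousLinearMap‖

noncomputable def hermFun {n : ℕ} {X : Matrix (Fin n) (Fin n) ℂ} (hX : X.IsHermitian)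
    (f : ℝ → ℝ) : Matrix (Fin n) (Fin n) ℂ :=
  (hX.eigenvectorUnitary : Matrix (Fin n) (Fin n) ℂ) *
    Matrix.diagonal (fun i => (f (hX.eigenvalues i) : ℂ)) *
      star (hX.eigenvectorUnitary : Matrix (Fin n) (Fin n) ℂ)

open scoped Topology Matrix.Norms.L2Operator

lemma bddAbove_image_Ioo_of_tendsto {φ : ℝ → ℝ} {a b La Lb : ℝ} (hφ : ContinuousOn φ (Ioo a b))
    (ha : Tendsto φ (𝓝[>] a) (𝓝 La)) (hb : Tendsto φ (𝓝[<] b) (𝓝 Lb)) :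
    BddAbove (φ '' Ioo a b) := by
  obtain ⟨a', ha', hφa⟩ :=
    mem_nhdsGT_iff_exists_Ioo_subset.mp (ha.eventually_lt_const (lt_add_one La))
  obtain ⟨b', hb', hφb⟩ :=
    mem_nhdsLT_iff_exists_Ioo_subset.mp (hb.eventually_lt_const (lt_add_one Lb))
  have hcover : Ioo a b ⊆ Ioo a a' ∪ Icc a' b' ∪ Ioo b' b := by
    intro x ⟨hax, hxb⟩
    rcases lt_or_ge x a' with hxa' | hxa'
    · exact Or.inl (Or.inl ⟨hax, hxa'⟩)
    rcases le_or_gt x b' with hxb' | hxb'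
    · exact Or.inl (Or.inr ⟨hxa', hxb'⟩)
    · exact Or.inr ⟨hxb', hxb⟩
  have hmid : BddAbove (φ '' Icc a' b') :=
    isCompact_Icc.bddAbove_image (hφ.mono (Icc_subset_Ioo (mem_Ioi.mp ha') (mem_Iio.mp hb')))
  refine BddAbove.mono (image_mono hcover) ?_
  rw [image_union, image_union]
  refine (BddAbove.union ⟨La + 1, ?_⟩ hmid).union ⟨Lb + 1, ?_⟩
  · rintro - ⟨x, hx, rfl⟩
    exact (hφa hx).le
  · rintro - ⟨x, hx, rfl⟩
    exact (hφb hx).le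

lemma eq_zero_of_tendsto_div {α 𝕜 : Type*} [NormedField 𝕜] {l : Filter α} [l.NeBot]
    {g h : α → 𝕜} {c L : 𝕜} (hg : Tendsto g l (𝓝 c)) (hh : Tendsto h l (𝓝 0))
    (hgh : Tendsto (fun x => g x / h x) l (𝓝 L)) (hne : ∀ᶠ x in l, h x ≠ 0) : c = 0 := by
  have hprod : Tendsto g l (𝓝 (L * 0)) :=
    (hgh.mul hh).congr' (hne.mono fun x hx => div_mul_cancel₀ (g x) hx)
  rw [mul_zero] at hprod
  exact tendsto_nhds_unique hg hprod

lemma norm_cfc_le_mul_norm_cfc_rpow {A : Type*} [NormedRing A] [StarRing A] [NormedAlgebra ℝ A]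
    [IsometricContinuousFunctionalCalculus ℝ A IsSelfAdjoint] {a : A} (ha : IsSelfAdjoint a)
    {g h : ℝ → ℝ} (hh : ContinuousOn h (spectrum ℝ a)) {C q : ℝ} (hC : 0 ≤ C) (hq : 0 ≤ q)
    (hgh : ∀ x ∈ spectrum ℝ a, ‖g x‖ ≤ C * ‖h x‖ ^ q) :
    ‖cfc g a‖ ≤ C * ‖cfc h a‖ ^ q :=
  norm_cfc_le (by positivity) fun x hx => (hgh x hx).trans <| mul_le_mul_of_nonneg_left
    (Real.rpow_le_rpow (norm_nonneg _) (norm_apply_le_norm_cfc h a hx hh ha) hq) hC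

lemma cfc_self_sub_sq {R A : Type*} {p : A → Prop} [CommRing R] [StarRing R] [MetricSpace R]
    [IsTopologicalRing R] [ContinuousStar R] [TopologicalSpace A] [Ring A] [StarRing A]
    [Algebra R A] [ContinuousFunctionalCalculus R A p] (f : R → R) (a : A)
    (hf : ContinuousOn f (spectrum R a)) (ha : p a) :
    cfc (fun x => f x - f x ^ 2) a = cfc f a - cfc f a ^ 2 := by
  rw [cfc_sub .., cfc_pow ..]

noncomputable def cqRatio (f : ℝ → ℝ) (q x : ℝ) : ℝ :=
  (f x - f x ^ 2) / (x - x ^ 2) ^ q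

lemma self_sub_sq_pos_of_mem_Ioo {x : ℝ} (hx : x ∈ Ioo 0 1) : 0 < x - x ^ 2 := by
  nlinarith [hx.1, hx.2]

lemma self_sub_sq_nonneg_of_mem_Icc {x : ℝ} (hx : x ∈ Icc 0 1) : 0 ≤ x - x ^ 2 := by
  nlinarith [hx.1, hx.2]

lemma continuousOn_cqRatio {f : ℝ → ℝ} (q : ℝ) (hf : ContinuousOn f (Ioo 0 1)) :
    ContinuousOn (cqRatio f q) (Ioo 0 1) :=
  (hf.sub (hf.pow 2)).div
    ((continuousOn_id.sub (continuousOn_id.pow 2)).rpow_const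
      fun _ hx => Or.inl (self_sub_sq_pos_of_mem_Ioo hx).ne')
    fun _ hx => (Real.rpow_pos_of_pos (self_sub_sq_pos_of_mem_Ioo hx) q).ne'

lemma sSup_cqRatio_nonneg {f : ℝ → ℝ} (q : ℝ) (hf01 : ∀ x ∈ Icc (0 : ℝ) 1, f x ∈ Icc (0 : ℝ) 1) :
    0 ≤ sSup (cqRatio f q '' Ioo 0 1) := by
  refine Real.sSup_nonneg ?_
  rintro - ⟨x, hx, rfl⟩
  exact div_nonneg (self_sub_sq_nonneg_of_mem_Icc (hf01 x (Ioo_subset_Icc_self hx)))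
    (Real.rpow_nonneg (self_sub_sq_pos_of_mem_Ioo hx).le q)

lemma self_sub_sq_apply_eq_zero_of_tendsto_cqRatio {f : ℝ → ℝ} {q c L : ℝ} {l : Filter ℝ}
    [l.NeBot] (hq : 0 < q) (hl : l ≤ 𝓝[Ioo 0 1] c) (hc : c - c ^ 2 = 0)
    (hf : ContinuousWithinAt f (Ioo 0 1) c) (hL : Tendsto (cqRatio f q) l (𝓝 L)) :
    f c - f c ^ 2 = 0 := by
  have hf' : Tendsto f l (𝓝 (f c)) := hf.tendsto.mono_left hl
  have hden : Tendsto (fun x : ℝ => (x - x ^ 2) ^ q) l (𝓝 0) := by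
    have hcont : ContinuousAt (fun x : ℝ => (x - x ^ 2) ^ q) c :=
      (continuous_id.sub (continuous_pow 2)).continuousAt.rpow_const (Or.inr hq.le)
    simpa [hc, Real.zero_rpow hq.ne'] using hcont.tendsto.mono_left (hl.trans nhdsWithin_le_nhds)
  exact eq_zero_of_tendsto_div (hf'.sub (hf'.pow 2)) hden hL
    ((eventually_mem_nhdsWithin.filter_mono hl).mono fun x hx =>
      (Real.rpow_pos_of_pos (self_sub_sq_pos_of_mem_Ioo hx) q).ne')

lemma norm_self_sub_sq_apply_le_sSup_cqRatio_mul {f : ℝ → ℝ} {q L₀ L₁ : ℝ} (hq : 0 < q)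
    (hfc : ContinuousOn f (Icc 0 1)) (hf01 : ∀ x ∈ Icc (0 : ℝ) 1, f x ∈ Icc (0 : ℝ) 1)
    (hL₀ : Tendsto (cqRatio f q) (𝓝[>] 0) (𝓝 L₀)) (hL₁ : Tendsto (cqRatio f q) (𝓝[<] 1) (𝓝 L₁))
    (hbdd : BddAbove (cqRatio f q '' Ioo 0 1)) {x : ℝ} (hx : x ∈ Icc 0 1) :
    ‖f x - f x ^ 2‖ ≤ sSup (cqRatio f q '' Ioo 0 1) * ‖x - x ^ 2‖ ^ q := by
  rw [Real.norm_of_nonneg (self_sub_sq_nonneg_of_mem_Icc (hf01 x hx)),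
    Real.norm_of_nonneg (self_sub_sq_nonneg_of_mem_Icc hx)]
  have hfx : ContinuousWithinAt f (Ioo 0 1) x := (hfc x hx).mono Ioo_subset_Icc_self
  rcases hx.1.eq_or_lt with rfl | h0
  · rw [self_sub_sq_apply_eq_zero_of_tendsto_cqRatio hq (nhdsWithin_Ioo_eq_nhdsGT one_pos).ge
      (by norm_num) hfx hL₀]
    simp [Real.zero_rpow hq.ne']
  rcases hx.2.eq_or_lt with rfl | h1
  · rw [self_sub_sq_apply_eq_zero_of_tendsto_cqRatio hq (nhdsWithin_Ioo_eq_nhdsLT one_pos).ge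
      (by norm_num) hfx hL₁]
    simp [Real.zero_rpow hq.ne']
  exact (div_le_iff₀ (Real.rpow_pos_of_pos (self_sub_sq_pos_of_mem_Ioo ⟨h0, h1⟩) q)).mp
    (le_csSup hbdd (mem_image_of_mem _ ⟨h0, h1⟩))

lemma specNorm_eq_norm {n : ℕ} (A : Matrix (Fin n) (Fin n) ℂ) : specNorm A = ‖A‖ :=
  (Matrix.l2_opNorm_def A).symm

lemma hermFun_eq_cfc {n : ℕ} {X : Matrix (Fin n) (Fin n) ℂ} (hX : X.IsHermitian) (f : ℝ → ℝ) :
    hermFun hX f = cfc f X := by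
  rw [hX.cfc_eq, Matrix.IsHermitian.cfc, Unitary.conjStarAlgAut_apply]
  rfl

/-- Theorem 1 of the paper with a = 0: if f : [0,1] → [0,1] is continuous, q > 0, and the
one-sided limits of (f(x) − f(x)²)/(x − x²)^q at 0⁺ and 1⁻ exist, then for every Hermitian X
with eigenvalues in [0,1] and X ≠ X²,
‖f(X) − f(X)²‖₂/‖X − X²‖₂^q ≤ sup_{x ∈ (0,1)} (f(x) − f(x)²)/(x − x²)^q. -/
theorem Cq_bound {n : ℕ} (f : ℝ → ℝ) (q : ℝ) (hq : 0 < q)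
    (hfc : ContinuousOn f (Icc 0 1)) (hf01 : ∀ x ∈ Icc (0 : ℝ) 1, f x ∈ Icc (0 : ℝ) 1)
    (hlim0 : ∃ L₀ : ℝ, Tendsto (fun x : ℝ => (f x - (f x) ^ 2) / (x - x ^ 2) ^ q)
      (nhdsWithin 0 (Ioi 0)) (nhds L₀))
    (hlim1 : ∃ L₁ : ℝ, Tendsto (fun x : ℝ => (f x - (f x) ^ 2) / (x - x ^ 2) ^ q)
      (nhdsWithin 1 (Iio 1)) (nhds L₁))
    (X : Matrix (Fin n) (Fin n) ℂ) (hX : X.IsHermitian)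
    (hev : ∀ i, hX.eigenvalues i ∈ Icc (0 : ℝ) 1) (hXne : X ≠ X ^ 2) :
    specNorm (hermFun hX f - (hermFun hX f) ^ 2) / (specNorm (X - X ^ 2)) ^ q ≤
      sSup ((fun x : ℝ => (f x - (f x) ^ 2) / (x - x ^ 2) ^ q) '' Ioo 0 1) := by
  obtain ⟨L₀, hL₀⟩ := hlim0
  obtain ⟨L₁, hL₁⟩ := hlim1
  have hspec : spectrum ℝ X ⊆ Icc 0 1 := by
    rw [hX.spectrum_real_eq_range_eigenvalues]
    exact range_subset_iff.mpr hev
  have hbdd : BddAbove (cqRatio f q '' Ioo 0 1) :=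
    bddAbove_image_Ioo_of_tendsto (continuousOn_cqRatio q (hfc.mono Ioo_subset_Icc_self)) hL₀ hL₁
  have hpos : 0 < specNorm (X - X ^ 2) := by
    rw [specNorm_eq_norm]
    exact norm_pos_iff.mpr (sub_ne_zero.mpr hXne)
  have hXsq : X - X ^ 2 = cfc (fun x : ℝ => x - x ^ 2) X := by
    rw [cfc_self_sub_sq (fun x : ℝ => x) X continuousOn_id hX.isSelfAdjoint, cfc_id' ℝ X]
  rw [div_le_iff₀ (Real.rpow_pos_of_pos hpos q), specNorm_eq_norm, specNorm_eq_norm, hXsq,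
    hermFun_eq_cfc, ← cfc_self_sub_sq f X (hfc.mono hspec) hX.isSelfAdjoint]
  exact norm_cfc_le_mul_norm_cfc_rpow hX.isSelfAdjoint (by fun_prop) (sSup_cqRatio_nonneg q hf01)
    hq.le fun x hx => norm_self_sub_sq_apply_le_sSup_cqRatio_mul hq hfc hf01 hL₀ hL₁ hbdd (hspec hx)
end

section
/- Define p₁₂(x) = p₁(p₂(x)) = (2x − x²)² with p₁(x) = x² and p₂(x) = 2x − x². Then the supremum over x ∈ (0,1) of (p₁₂(x) − p₁₂(x)²)/(x − x²)² equals (71 + 17√17)/32. -/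
open Set

/-- For p₁₂(x) = (2x − x²)² (SP2 composite p₁ ∘ p₂), the supremum over x ∈ (0,1) of
(p₁₂(x) − p₁₂(x)²)/(x − x²)² equals (71 + 17√17)/32. -/
theorem sp2_C2_p12 (p₁ p₂ p₁₂ : ℝ → ℝ)
    (hp₁ : ∀ x : ℝ, p₁ x = x ^ 2) (hp₂ : ∀ x : ℝ, p₂ x = 2 * x - x ^ 2)
    (hp₁₂ : ∀ x : ℝ, p₁₂ x = p₁ (p₂ x)) :
    sSup ((fun x : ℝ => (p₁₂ x - (p₁₂ x) ^ 2) / (x - x ^ 2) ^ 2) '' Ioo 0 1)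
      = (71 + 17 * Real.sqrt 17) / 32 := by
  set s := Real.sqrt 17 with hs
  have hs2 : s ^ 2 = 17 := Real.sq_sqrt (by norm_num)
  have hs0 : 0 ≤ s := Real.sqrt_nonneg 17
  have hs4 : 4 ≤ s := by nlinarith
  have hs5 : s < 5 := by nlinarith
  set M : ℝ := (71 + 17 * s) / 32 with hM
  -- simplification of the function on (0,1)
  have hfun : ∀ x ∈ Ioo (0:ℝ) 1,
      (p₁₂ x - (p₁₂ x) ^ 2) / (x - x ^ 2) ^ 2 = (2 - x) ^ 2 * (1 + 2 * x - x ^ 2) := by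
    intro x hx
    obtain ⟨hx0, hx1⟩ := hx
    have hd : x - x ^ 2 ≠ 0 := by nlinarith
    rw [hp₁₂, hp₁, hp₂]
    field_simp
    ring
  -- upper bound
  have hub : ∀ x ∈ Ioo (0:ℝ) 1, (2 - x) ^ 2 * (1 + 2 * x - x ^ 2) ≤ M := by
    intro x hx
    have h1 := sq_nonneg ((x - (5 - s) / 4) * (x - (7 + s) / 4))
    have h2 := sq_nonneg (x - (5 - s) / 4)
    nlinarith [mul_nonneg (by linarith : (0:ℝ) ≤ (s - 1) / 4) h2]
  -- the maximum is attained at (5 - √17)/4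
  have ht : (5 - s) / 4 ∈ Ioo (0:ℝ) 1 := by
    constructor <;> [linarith; linarith]
  have hval : (2 - (5 - s) / 4) ^ 2 * (1 + 2 * ((5 - s) / 4) - ((5 - s) / 4) ^ 2) = M := by
    rw [hM]
    linear_combination ((-s^2 - 4*s + 17)/256) * hs2
  refine le_antisymm ?_ ?_
  · apply csSup_le ((nonempty_Ioo.mpr one_pos).image _)
    rintro y ⟨x, hx, rfl⟩
    show (p₁₂ x - (p₁₂ x) ^ 2) / (x - x ^ 2) ^ 2 ≤ M
    rw [hfun x hx]
    exact hub x hx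
  · apply le_csSup
    · refine ⟨M, ?_⟩
      rintro y ⟨x, hx, rfl⟩
      show (p₁₂ x - (p₁₂ x) ^ 2) / (x - x ^ 2) ^ 2 ≤ M
      rw [hfun x hx]
      exact hub x hx
    · exact ⟨(5 - s) / 4, ht, by show (p₁₂ _ - (p₁₂ _) ^ 2) / (_ - _ ^ 2) ^ 2 = M; rw [hfun _ ht, hval]⟩
end

section
/- Define p₂₁(x) = p₂(p₁(x)) = 2x² − x⁴ with p₁(x) = x² and p₂(x) = 2x − x². Then the supremum over x ∈ (0,1) of (p₂₁(x) − p₂₁(x)²)/(x − x²)² equals (71 + 17√17)/32, the same value as for p₁₂ = p₁ ∘ p₂. -/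
/-!
Writing `y = p x`, the ratio is `(y - y²) / (x - x²)²`. Both numerator and denominator are
invariant under `y ↦ 1 - y`, `x ↦ 1 - x`, and `p₁₂ (1 - x) = (1 - x²)² = 1 - p₂₁ x`; so the two
ratios take the same values on `(0, 1)`. For `p₂₁` the ratio simplifies to `(2 - x²)(1 + x)²`,
whose maximum over the reals is attained at the root `(√17 - 1)/4` of `2x² + x - 2`, a factor
of its derivative, and lies inside `(0, 1)`.
-/

open Set

noncomputable section

def sp2Ratio (p : ℝ → ℝ) (x : ℝ) : ℝ := (p x - p x ^ 2) / (x - x ^ 2) ^ 2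

theorem sp2Ratio_one_sub_of_conj {p q : ℝ → ℝ} (h : ∀ x, q (1 - x) = 1 - p x) (x : ℝ) :
    sp2Ratio q (1 - x) = sp2Ratio p x := by
  rw [sp2Ratio, sp2Ratio, h]
  ring

theorem image_sp2Ratio_Ioo_of_conj {p q : ℝ → ℝ} (h : ∀ x, q (1 - x) = 1 - p x) :
    sp2Ratio q '' Ioo 0 1 = sp2Ratio p '' Ioo 0 1 := by
  have hcomp : sp2Ratio p = sp2Ratio q ∘ (1 - ·) :=
    funext fun x => (sp2Ratio_one_sub_of_conj h x).symm
  rw [hcomp, image_comp, image_const_sub_Ioo, sub_self, sub_zero]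

theorem sp2Ratio_two_mul_sq_sub_pow_four {x : ℝ} (hx : x - x ^ 2 ≠ 0) :
    sp2Ratio (fun x => 2 * x ^ 2 - x ^ 4) x = (2 - x ^ 2) * (1 + x) ^ 2 := by
  rw [sp2Ratio, div_eq_iff (pow_ne_zero 2 hx)]
  ring

theorem two_sub_sq_mul_one_add_sq_le (x : ℝ) :
    (2 - x ^ 2) * (1 + x) ^ 2 ≤ (71 + 17 * √17) / 32 := by
  set s := √17
  have hs : s ^ 2 = 17 := Real.sq_sqrt (by norm_num)
  have hs1 : 1 < s := by nlinarith [Real.sqrt_nonneg 17]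
  -- the cofactor of the double root `(s - 1)/4` is `8 (x + (3 + s)/4)² + 2 (s - 1) > 0`
  have hgap : (71 + 17 * s) / 32 - (2 - x ^ 2) * (1 + x) ^ 2
      = (4 * x - s + 1) ^ 2 * (8 * x ^ 2 + (12 + 4 * s) * x + 5 * s + 11) / 128 := by
    linear_combination ((24 * x ^ 2 + 36 * x - 1 - 4 * x * s - 5 * s) / 128) * hs
  have hcof : 0 ≤ 8 * x ^ 2 + (12 + 4 * s) * x + 5 * s + 11 := by
    nlinarith [sq_nonneg (4 * x + 3 + s)]
  nlinarith [mul_nonneg (sq_nonneg (4 * x - s + 1)) hcof]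

theorem two_sub_sq_mul_one_add_sq_at_crit :
    (2 - ((√17 - 1) / 4) ^ 2) * (1 + (√17 - 1) / 4) ^ 2 = (71 + 17 * √17) / 32 := by
  have hs : √17 ^ 2 = 17 := Real.sq_sqrt (by norm_num)
  linear_combination ((17 - 4 * √17 - √17 ^ 2) / 256) * hs

theorem isGreatest_image_sp2Ratio_two_mul_sq_sub_pow_four :
    IsGreatest (sp2Ratio (fun x => 2 * x ^ 2 - x ^ 4) '' Ioo 0 1) ((71 + 17 * √17) / 32) := by
  have hden : ∀ x ∈ Ioo (0 : ℝ) 1, x - x ^ 2 ≠ 0 := fun x hx => by nlinarith [hx.1, hx.2]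
  have hs : √17 ^ 2 = 17 := Real.sq_sqrt (by norm_num)
  have hcrit : (√17 - 1) / 4 ∈ Ioo (0 : ℝ) 1 := by
    constructor <;> nlinarith [Real.sqrt_nonneg 17]
  refine ⟨⟨_, hcrit, ?_⟩, ?_⟩
  · rw [sp2Ratio_two_mul_sq_sub_pow_four (hden _ hcrit), two_sub_sq_mul_one_add_sq_at_crit]
  · rintro _ ⟨x, hx, rfl⟩
    rw [sp2Ratio_two_mul_sq_sub_pow_four (hden x hx)]
    exact two_sub_sq_mul_one_add_sq_le x

end

/-- For p₂₁(x) = 2x² − x⁴ (SP2 composite p₂ ∘ p₁), the supremum over x ∈ (0,1) of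
(p₂₁(x) − p₂₁(x)²)/(x − x²)² equals (71 + 17√17)/32, the same value as for p₁₂ = p₁ ∘ p₂. -/
theorem sp2_C2_p21 (p₁ p₂ p₂₁ p₁₂ : ℝ → ℝ)
    (hp₁ : ∀ x : ℝ, p₁ x = x ^ 2) (hp₂ : ∀ x : ℝ, p₂ x = 2 * x - x ^ 2)
    (hp₂₁ : ∀ x : ℝ, p₂₁ x = p₂ (p₁ x)) (hp₁₂ : ∀ x : ℝ, p₁₂ x = p₁ (p₂ x)) :
    sSup ((fun x : ℝ => (p₂₁ x - (p₂₁ x) ^ 2) / (x - x ^ 2) ^ 2) '' Ioo 0 1)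
      = (71 + 17 * Real.sqrt 17) / 32 ∧
    sSup ((fun x : ℝ => (p₂₁ x - (p₂₁ x) ^ 2) / (x - x ^ 2) ^ 2) '' Ioo 0 1)
      = sSup ((fun x : ℝ => (p₁₂ x - (p₁₂ x) ^ 2) / (x - x ^ 2) ^ 2) '' Ioo 0 1) := by
  have hconj : ∀ x, p₁₂ (1 - x) = 1 - p₂₁ x := fun x => by
    simp only [hp₁₂, hp₂₁, hp₂, hp₁]
    ring
  have hp₂₁' : p₂₁ = fun x => 2 * x ^ 2 - x ^ 4 := funext fun x => by
    simp only [hp₂₁, hp₂, hp₁]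
    ring
  change sSup (sp2Ratio p₂₁ '' Ioo 0 1) = _ ∧
    sSup (sp2Ratio p₂₁ '' Ioo 0 1) = sSup (sp2Ratio p₁₂ '' Ioo 0 1)
  rw [image_sp2Ratio_Ioo_of_conj hconj, hp₂₁',
    isGreatest_image_sp2Ratio_two_mul_sq_sub_pow_four.csSup_eq]
  exact ⟨rfl, rfl⟩
end

section
/- Let p(x) = 3x² − 2x³ and fix β ∈ (0, 1/2). For all x ∈ [0, β] ∪ [1−β, 1], one has 0 ≤ (p(x) − p(x)²)/(p(β) − p(β)²) ≤ (x − x²)/(β − β²). -/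
open Set

/-- For the McWeeny polynomial p(x) = 3x² − 2x³ and β ∈ (0,1/2), for all
x ∈ [0,β] ∪ [1−β,1] one has 0 ≤ (p(x) − p(x)²)/(p(β) − p(β)²) ≤ (x − x²)/(β − β²). -/
theorem mcweeny_scalar_K (p : ℝ → ℝ) (hp : ∀ x : ℝ, p x = 3 * x ^ 2 - 2 * x ^ 3)
    (β : ℝ) (hβ : β ∈ Ioo (0 : ℝ) (1 / 2))
    (x : ℝ) (hx : x ∈ Icc (0 : ℝ) β ∪ Icc (1 - β) 1) :
    0 ≤ (p x - (p x) ^ 2) / (p β - (p β) ^ 2) ∧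
    (p x - (p x) ^ 2) / (p β - (p β) ^ 2) ≤ (x - x ^ 2) / (β - β ^ 2) := by
  obtain ⟨hβ0, hβh⟩ := hβ
  rw [hp x, hp β]
  have hx0 : 0 ≤ x := by
    rcases hx with ⟨h, _⟩ | ⟨h, _⟩ <;> linarith
  have hx1 : x ≤ 1 := by
    rcases hx with ⟨_, h⟩ | ⟨_, h⟩ <;> linarith
  have hu : x - x ^ 2 ≤ β - β ^ 2 := by
    rcases hx with ⟨_, h⟩ | ⟨h, _⟩ <;> nlinarith
  have hu0 : 0 ≤ x - x ^ 2 := by nlinarith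
  have hb : 0 < β - β ^ 2 := by nlinarith
  -- q(t) = (t - t^2)^2 * (3 + 4*(t - t^2))
  have hqβ : 0 < (3 * β ^ 2 - 2 * β ^ 3) - (3 * β ^ 2 - 2 * β ^ 3) ^ 2 := by
    have h : (3 * β ^ 2 - 2 * β ^ 3) - (3 * β ^ 2 - 2 * β ^ 3) ^ 2
        = β ^ 2 * (1 - β) ^ 2 * ((3 - 2 * β) * (1 + 2 * β)) := by ring
    rw [h]
    apply mul_pos (mul_pos (pow_pos hβ0 2) (pow_pos (by linarith) 2))
    apply mul_pos <;> linarith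
  have hqx : 0 ≤ (3 * x ^ 2 - 2 * x ^ 3) - (3 * x ^ 2 - 2 * x ^ 3) ^ 2 := by
    have h : (3 * x ^ 2 - 2 * x ^ 3) - (3 * x ^ 2 - 2 * x ^ 3) ^ 2
        = x ^ 2 * (1 - x) ^ 2 * ((3 - 2 * x) * (1 + 2 * x)) := by ring
    rw [h]
    apply mul_nonneg (mul_nonneg (by positivity) (by positivity))
    apply mul_nonneg <;> linarith
  constructor
  · exact div_nonneg hqx hqβ.le
  · rw [div_le_div_iff₀ hqβ hb]
    nlinarith [mul_nonneg hu0 hb.le, sq_nonneg (x - x^2), sq_nonneg (β - β^2),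
      mul_nonneg (mul_nonneg hu0 hb.le) (sub_nonneg.2 hu)]
end

section
/- Let X be a Hermitian matrix with all eigenvalues in [0,1] and X ≠ X², and let p(x) = 3x² − 2x³ be the McWeeny polynomial. Define K(X) = ‖X − X²‖_F / ‖X − X²‖₂ (Frobenius norm over spectral norm). Then K(p(X)) ≤ K(X)², provided p(X) ≠ p(X)². -/
open Matrix Set

/-- Frobenius norm of a complex matrix. -/
noncomputable def frobNorm {n : ℕ} (A : Matrix (Fin n) (Fin n) ℂ) : ℝ :=
  Real.sqrt (∑ i, ∑ j, ‖A i j‖ ^ 2)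

/-!
Diagonalise `X = U diag(λ) U*`. Then `X - X²` and `p(X) - p(X)²` are `U diag(·) U*` of
`μᵢ = λᵢ - λᵢ² ≥ 0` and of `p(λᵢ) - p(λᵢ)² = μᵢ² (3 + 4μᵢ)` (as `p = x² (3 - 2x)` and
`1 - p = (1 - x)² (1 + 2x)`). With `β = max μᵢ`, the spectral norms are `β` and `β² (3 + 4β)`,
while `‖p(X) - p(X)²‖_F ≤ ∑ μᵢ² (3 + 4μᵢ) ≤ (3 + 4β) ‖X - X²‖_F²`; dividing gives the claim.
-/

lemma pi_norm_eq_of_forall_le {ι : Type*} [Fintype ι] {v : ι → ℝ} {i₀ : ι} (hv : ∀ i, 0 ≤ v i)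
    (hmax : ∀ i, v i ≤ v i₀) : ‖v‖ = v i₀ := by
  refine le_antisymm ((pi_norm_le_iff_of_nonneg (hv i₀)).2 fun i => ?_) ?_
  · rw [Real.norm_of_nonneg (hv i)]
    exact hmax i
  · simpa [Real.norm_of_nonneg (hv i₀)] using norm_le_pi_norm v i₀

lemma sqrt_sum_sq_div_le_sq_of_le_mul_sq {ι : Type*} [Fintype ι] {μ ν : ι → ℝ} {c : ℝ} {i₀ : ι}
    (hν : ∀ i, 0 ≤ ν i) (hle : ∀ i, ν i ≤ c * μ i ^ 2) (heq : ν i₀ = c * μ i₀ ^ 2) :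
    √(∑ i, ν i ^ 2) / ν i₀ ≤ (√(∑ i, μ i ^ 2) / μ i₀) ^ 2 := by
  rcases (hν i₀).eq_or_lt with h0 | hpos
  · rw [← h0, div_zero]
    positivity
  have hμ : 0 < μ i₀ ^ 2 := by
    rcases (sq_nonneg (μ i₀)).eq_or_lt with h | h
    · rw [← h, mul_zero] at heq
      linarith
    · exact h
  have hc : 0 < c := pos_of_mul_pos_left (heq ▸ hpos) hμ.le
  have hsum : √(∑ i, ν i ^ 2) ≤ c * ∑ i, μ i ^ 2 := calc
    √(∑ i, ν i ^ 2) ≤ ∑ i, ν i := by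
      rw [Real.sqrt_le_left (Finset.sum_nonneg fun i _ => hν i)]
      exact Finset.sum_sq_le_sq_sum_of_nonneg fun i _ => hν i
    _ ≤ ∑ i, c * μ i ^ 2 := Finset.sum_le_sum fun i _ => hle i
    _ = c * ∑ i, μ i ^ 2 := (Finset.mul_sum ..).symm
  rw [div_pow, Real.sq_sqrt (Finset.sum_nonneg fun i _ => sq_nonneg _), heq,
    div_le_div_iff₀ (by positivity) hμ]
  linarith [mul_le_mul_of_nonneg_right hsum hμ.le]

lemma sqrt_sum_sq_div_norm_le_sq_mcweeny {ι : Type*} [Fintype ι] {μ : ι → ℝ}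
    (hμ : ∀ i, 0 ≤ μ i) :
    √(∑ i, (μ i ^ 2 * (3 + 4 * μ i)) ^ 2) / ‖fun i => μ i ^ 2 * (3 + 4 * μ i)‖ ≤
      (√(∑ i, μ i ^ 2) / ‖μ‖) ^ 2 := by
  rcases isEmpty_or_nonempty ι with hι | hι
  · simp
  obtain ⟨i₀, hi₀⟩ := Finite.exists_max μ
  have hν (i : ι) : 0 ≤ μ i ^ 2 * (3 + 4 * μ i) := by
    have := hμ i
    positivity
  have hle (i : ι) : μ i ^ 2 * (3 + 4 * μ i) ≤ (3 + 4 * μ i₀) * μ i ^ 2 := by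
    have := hi₀ i
    rw [mul_comm]
    gcongr
  have hνmax (i : ι) : μ i ^ 2 * (3 + 4 * μ i) ≤ μ i₀ ^ 2 * (3 + 4 * μ i₀) := by
    have := hμ i
    have := hi₀ i
    gcongr
  rw [pi_norm_eq_of_forall_le hμ hi₀, pi_norm_eq_of_forall_le hν hνmax]
  exact sqrt_sum_sq_div_le_sq_of_le_mul_sq hν hle (mul_comm _ _)

lemma sum_norm_sq_eq_re_trace_conjTranspose_mul_self {ι κ : Type*} [Fintype ι] [Fintype κ]
    (A : Matrix ι κ ℂ) : ∑ i, ∑ j, ‖A i j‖ ^ 2 = (Aᴴ * A).trace.re := by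
  simp only [Matrix.trace, Matrix.diag_apply, Matrix.mul_apply, Matrix.conjTranspose_apply,
    Complex.re_sum, RCLike.star_def, Complex.conj_mul', ← Complex.ofReal_pow, Complex.ofReal_re]
  exact Finset.sum_comm

section Norms

variable {n : ℕ}

open scoped Matrix.Norms.L2Operator in
lemma specNorm_eq_l2_opNorm (A : Matrix (Fin n) (Fin n) ℂ) : specNorm A = ‖A‖ := rfl

open scoped Matrix.Norms.L2Operator in
lemma specNorm_unitary_conj (U : unitary (Matrix (Fin n) (Fin n) ℂ))
    (A : Matrix (Fin n) (Fin n) ℂ) :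
    specNorm ((U : Matrix (Fin n) (Fin n) ℂ) * A * star (U : Matrix (Fin n) (Fin n) ℂ)) =
      specNorm A := by
  rw [specNorm_eq_l2_opNorm, specNorm_eq_l2_opNorm, ← Unitary.coe_star,
    CStarRing.norm_mul_coe_unitary, CStarRing.norm_coe_unitary_mul]

lemma specNorm_diagonal (c : Fin n → ℂ) : specNorm (diagonal c) = ‖c‖ :=
  l2_opNorm_diagonal c

lemma frobNorm_unitary_conj (U : unitary (Matrix (Fin n) (Fin n) ℂ))
    (A : Matrix (Fin n) (Fin n) ℂ) :
    frobNorm ((U : Matrix (Fin n) (Fin n) ℂ) * A * star (U : Matrix (Fin n) (Fin n) ℂ)) =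
      frobNorm A := by
  have htrace (B : Matrix (Fin n) (Fin n) ℂ) :
      (Unitary.conjStarAlgAut ℂ _ U B).trace = B.trace := by
    rw [Unitary.conjStarAlgAut_apply, trace_mul_cycle, Unitary.coe_star_mul_self, one_mul]
  change frobNorm (Unitary.conjStarAlgAut ℂ _ U A) = _
  rw [frobNorm, frobNorm, sum_norm_sq_eq_re_trace_conjTranspose_mul_self,
    sum_norm_sq_eq_re_trace_conjTranspose_mul_self, ← star_eq_conjTranspose, ← map_star,
    ← map_mul, htrace, star_eq_conjTranspose]

lemma frobNorm_diagonal (c : Fin n → ℂ) : frobNorm (diagonal c) = √(∑ i, ‖c i‖ ^ 2) := by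
  simp [frobNorm, diagonal_apply, apply_ite]

variable {X : Matrix (Fin n) (Fin n) ℂ} (hX : X.IsHermitian)

lemma frobNorm_cfc (f : ℝ → ℝ) :
    frobNorm (hX.cfc f) = √(∑ i, (f ∘ hX.eigenvalues) i ^ 2) := by
  simp [IsHermitian.cfc, frobNorm_unitary_conj, frobNorm_diagonal]

lemma specNorm_cfc (f : ℝ → ℝ) : specNorm (hX.cfc f) = ‖f ∘ hX.eigenvalues‖ := by
  rw [IsHermitian.cfc, Unitary.conjStarAlgAut_apply, specNorm_unitary_conj, specNorm_diagonal]
  simp [Pi.norm_def, Function.comp_def]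

lemma aeval_eq_cfc (q : Polynomial ℝ) : Polynomial.aeval X q = hX.cfc q.eval := by
  rw [← hX.cfc_eq, cfc_polynomial q X hX.isSelfAdjoint]

end Norms

theorem mcweeny_K_ratio_general {n : ℕ} (X P : Matrix (Fin n) (Fin n) ℂ)
    (hX : X.IsHermitian) (hev : ∀ i, hX.eigenvalues i ∈ Icc (0 : ℝ) 1)
    (hP : P = 3 • X ^ 2 - 2 • X ^ 3) :
    frobNorm (P - P ^ 2) / specNorm (P - P ^ 2) ≤
      (frobNorm (X - X ^ 2) / specNorm (X - X ^ 2)) ^ 2 := by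
  let g : ℝ → ℝ := fun x => x - x ^ 2
  have hXX : X - X ^ 2 = hX.cfc g := by
    have := aeval_eq_cfc hX (Polynomial.X - Polynomial.X ^ 2)
    simp only [map_sub, map_pow, Polynomial.aeval_X] at this
    rw [this]
    simp only [Polynomial.eval_sub, Polynomial.eval_X, Polynomial.eval_pow, g]
  have hPP : P - P ^ 2 = hX.cfc (fun x => g x ^ 2 * (3 + 4 * g x)) := by
    let p : Polynomial ℝ := 3 • Polynomial.X ^ 2 - 2 • Polynomial.X ^ 3
    have := aeval_eq_cfc hX (p - p ^ 2)
    simp only [p, map_sub, map_pow, map_nsmul, Polynomial.aeval_X] at this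
    rw [hP, this]
    congr 1
    funext x
    simp only [nsmul_eq_mul, Nat.cast_ofNat, Polynomial.eval_sub, Polynomial.eval_mul,
      Polynomial.eval_ofNat, Polynomial.eval_pow, Polynomial.eval_X, g]
    ring
  have hg (i : Fin n) : 0 ≤ (g ∘ hX.eigenvalues) i := by
    obtain ⟨h0, h1⟩ := hev i
    simp only [g, Function.comp_apply]
    nlinarith
  rw [hXX, hPP, frobNorm_cfc, frobNorm_cfc, specNorm_cfc, specNorm_cfc]
  exact sqrt_sum_sq_div_norm_le_sq_mcweeny hg

/-- For Hermitian X with eigenvalues in [0,1], X ≠ X², and the McWeeny polynomial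
p(x) = 3x² − 2x³ applied as the matrix polynomial P = 3X² − 2X³ with P ≠ P², the ratio
K(X) = ‖X − X²‖_F/‖X − X²‖₂ satisfies K(P) ≤ K(X)². -/
theorem mcweeny_K_ratio {n : ℕ} (X P : Matrix (Fin n) (Fin n) ℂ)
    (hX : X.IsHermitian) (hev : ∀ i, hX.eigenvalues i ∈ Icc (0 : ℝ) 1)
    (hP : P = 3 • X ^ 2 - 2 • X ^ 3)
    (hXne : X ≠ X ^ 2) (hPne : P ≠ P ^ 2) :
    frobNorm (P - P ^ 2) / specNorm (P - P ^ 2) ≤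
      (frobNorm (X - X ^ 2) / specNorm (X - X ^ 2)) ^ 2 :=
  mcweeny_K_ratio_general X P hX hev hP
end

section
/- Define sequences from γ₀ = β₀ ∈ (0,1) by: γ₁ = γ₀², β₁ = 2β₀ − β₀²; and for k = 1,2: γ_{k+1} = 2γ_k − γ_k², β_{k+1} = β_k². Then β₁ > γ₁, β₂ > γ₂, and β₃ < γ₃. -/
open Set

/-- Starting from γ₀ = β₀ ∈ (0,1), with γ₁ = γ₀², β₁ = 2β₀ − β₀², and for k = 1,2:
γ_{k+1} = 2γ_k − γ_k², β_{k+1} = β_k², one has β₁ > γ₁, β₂ > γ₂ and β₃ < γ₃. -/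
theorem sp2_consecutive_polynomials (β₀ γ₀ β₁ γ₁ β₂ γ₂ β₃ γ₃ : ℝ)
    (h0 : γ₀ = β₀) (hβ0 : β₀ ∈ Ioo (0 : ℝ) 1)
    (hγ1 : γ₁ = γ₀ ^ 2) (hβ1 : β₁ = 2 * β₀ - β₀ ^ 2)
    (hγ2 : γ₂ = 2 * γ₁ - γ₁ ^ 2) (hβ2 : β₂ = β₁ ^ 2)
    (hγ3 : γ₃ = 2 * γ₂ - γ₂ ^ 2) (hβ3 : β₃ = β₂ ^ 2) :
    β₁ > γ₁ ∧ β₂ > γ₂ ∧ β₃ < γ₃ := by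
  obtain ⟨h1, h2⟩ := hβ0
  subst h0 hγ1 hβ1 hγ2 hβ2 hγ3 hβ3
  have hx : 0 < γ₀ * (1 - γ₀) := mul_pos h1 (by linarith)
  have hq : 0 < 2 + 4 * γ₀ - 5 * γ₀ ^ 2 + 2 * γ₀ ^ 3 - γ₀ ^ 4 := by
    nlinarith [sq_nonneg γ₀, sq_nonneg (1 - γ₀), mul_pos h1 h1, sq_nonneg (γ₀ * (1 - γ₀))]
  refine ⟨by nlinarith, by nlinarith [mul_pos hx hx], ?_⟩
  nlinarith [mul_pos (mul_pos hx hx) hq]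
end

section
/- For β ∈ (0, 1/2), the accelerated McWeeny ratio satisfies g₁(1/2, β) = 4, where g₁(x, β) = (p_mwa(x,β) − p_mwa(x,β)²)/(x − x²)² and p_mwa(x, β) = p_mw(3(12β² − 18β + 9)^{−1/2}(x − 1/2) + 1/2), p_mw(t) = 3t² − 2t³. Moreover g₁(x, β) ≤ 4 for all x ∈ [β, 1−β]. -/
open Set

/-!
Writing `w = t - t²`, McWeeny's polynomial satisfies `p_mw(t) - p_mw(t)² = w² (3 + 4w)`, and
`w ≤ 1/4` always, so the numerator of `g₁` is at most `4 w²` for `t = α(β)(x - 1/2) + 1/2`, where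
`α = accelScale`. Since `w = 1/4 - α²(x - 1/2)²` and `x - x² = 1/4 - (x - 1/2)²`, the bound
`g₁ ≤ 4` reduces to `0 ≤ w ≤ x - x²`, i.e. to `1 ≤ α²` and `α² (1/2 - β)² ≤ 1/4`, both of which
hold for `β ∈ [0, 3/4]`.
-/

theorem mcweeny_sub_sq (t : ℝ) :
    (3 * t ^ 2 - 2 * t ^ 3) - (3 * t ^ 2 - 2 * t ^ 3) ^ 2 = (t - t ^ 2) ^ 2 * (3 + 4 * (t - t ^ 2)) := by
  ring

theorem mcweeny_sub_sq_div_le_four {t y : ℝ} (h₀ : 0 ≤ t - t ^ 2) (hy : t - t ^ 2 ≤ y) :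
    ((3 * t ^ 2 - 2 * t ^ 3) - (3 * t ^ 2 - 2 * t ^ 3) ^ 2) / y ^ 2 ≤ 4 := by
  rw [mcweeny_sub_sq]
  have hquarter : t - t ^ 2 ≤ 1 / 4 := by nlinarith [sq_nonneg (t - 1 / 2)]
  refine div_le_of_le_mul₀ (sq_nonneg y) (by norm_num) ?_
  calc (t - t ^ 2) ^ 2 * (3 + 4 * (t - t ^ 2)) ≤ (t - t ^ 2) ^ 2 * 4 := by gcongr; linarith
    _ ≤ 4 * y ^ 2 := by rw [mul_comm]; gcongr

theorem sub_sq_stretch_mem_Icc {a x : ℝ} (ha : 1 ≤ a ^ 2) (hax : (a * (x - 1 / 2)) ^ 2 ≤ 1 / 4) :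
    (a * (x - 1 / 2) + 1 / 2) - (a * (x - 1 / 2) + 1 / 2) ^ 2 ∈ Icc 0 (x - x ^ 2) := by
  constructor
  · nlinarith
  · nlinarith [mul_le_mul_of_nonneg_right ha (sq_nonneg (x - 1 / 2))]

noncomputable def accelScale (β : ℝ) : ℝ := 3 / Real.sqrt (12 * β ^ 2 - 18 * β + 9)

theorem sq_accelScale (β : ℝ) : accelScale β ^ 2 = 9 / (12 * β ^ 2 - 18 * β + 9) := by
  have hpos : 0 < 12 * β ^ 2 - 18 * β + 9 := by nlinarith [sq_nonneg (β - 3 / 4)]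
  rw [accelScale, div_pow, Real.sq_sqrt hpos.le]
  norm_num

theorem one_le_sq_accelScale {β : ℝ} (hβ : β ∈ Icc 0 (3 / 2)) : 1 ≤ accelScale β ^ 2 := by
  rw [sq_accelScale, one_le_div (by nlinarith [sq_nonneg (β - 3 / 4)])]
  nlinarith [hβ.1, hβ.2]

theorem sq_accelScale_mul_le {β : ℝ} (hβ : β ∈ Icc 0 (3 / 4)) :
    accelScale β ^ 2 * (1 / 2 - β) ^ 2 ≤ 1 / 4 := by
  rw [sq_accelScale, div_mul_eq_mul_div, div_le_iff₀ (by nlinarith [sq_nonneg (β - 3 / 4)])]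
  nlinarith [hβ.1, hβ.2]

/-- For β ∈ (0,1/2), the accelerated McWeeny ratio satisfies g₁(1/2,β) = 4, where
g₁(x,β) = (p_mwa(x,β) − p_mwa(x,β)²)/(x − x²)² and
p_mwa(x,β) = p_mw(3(12β²−18β+9)^{−1/2}(x−1/2)+1/2), p_mw(t) = 3t²−2t³.
Moreover g₁(x,β) ≤ 4 for all x ∈ [β, 1−β]. -/
theorem mwacc_g1_max (pmw : ℝ → ℝ) (hpmw : ∀ t : ℝ, pmw t = 3 * t ^ 2 - 2 * t ^ 3)
    (pmwa : ℝ → ℝ → ℝ)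
    (hpmwa : ∀ x β : ℝ,
      pmwa x β = pmw (3 / Real.sqrt (12 * β ^ 2 - 18 * β + 9) * (x - 1 / 2) + 1 / 2))
    (g₁ : ℝ → ℝ → ℝ)
    (hg₁ : ∀ x β : ℝ, g₁ x β = (pmwa x β - (pmwa x β) ^ 2) / (x - x ^ 2) ^ 2)
    (β : ℝ) (hβ : β ∈ Ioo (0 : ℝ) (1 / 2)) :
    g₁ (1 / 2) β = 4 ∧ ∀ x ∈ Icc β (1 - β), g₁ x β ≤ 4 := by
  obtain ⟨hβ₀, hβ₁⟩ := hβ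
  refine ⟨by rw [hg₁, hpmwa, hpmw]; norm_num, fun x hx => ?_⟩
  have hx : (x - 1 / 2) ^ 2 ≤ (1 / 2 - β) ^ 2 := by nlinarith [hx.1, hx.2]
  have hstretch : (accelScale β * (x - 1 / 2)) ^ 2 ≤ 1 / 4 := by
    rw [mul_pow]
    exact (mul_le_mul_of_nonneg_left hx (sq_nonneg _)).trans
      (sq_accelScale_mul_le ⟨hβ₀.le, by linarith⟩)
  obtain ⟨hw₀, hw⟩ :=
    sub_sq_stretch_mem_Icc (one_le_sq_accelScale ⟨hβ₀.le, by linarith⟩) hstretch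
  rw [hg₁, hpmwa, hpmw]
  exact mcweeny_sub_sq_div_le_four hw₀ hw
end

section
/- Let q ≥ 1 be an integer and let h_q be the unique polynomial of degree 2q−1 with h_q(0)=0, h_q(1)=1 and vanishing derivatives of orders 1 through q−1 at both 0 and 1 (the Holas polynomial; h_2 is the McWeeny polynomial 3x²−2x³). For q = 2, the supremum over x ∈ (0,1) of (h_q(x) − h_q(x)²)/(x − x²)^q equals 4^{q−1} = 4. -/
open Set

/-- For q = 2, the Holas polynomial h₂ is the McWeeny polynomial 3x² − 2x³ (the unique degree-3
polynomial with h(0)=0, h(1)=1 and vanishing first derivative at 0 and 1), and the supremum over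
x ∈ (0,1) of (h₂(x) − h₂(x)²)/(x − x²)² equals 4^{2−1} = 4. -/
theorem holas_C2 (h : ℝ → ℝ) (hh : ∀ x : ℝ, h x = 3 * x ^ 2 - 2 * x ^ 3) :
    sSup ((fun x : ℝ => (h x - (h x) ^ 2) / (x - x ^ 2) ^ (2 : ℕ)) '' Ioo 0 1)
      = 4 ^ (2 - 1 : ℕ) := by
  have key : ∀ x ∈ Ioo (0:ℝ) 1,
      (h x - (h x) ^ 2) / (x - x ^ 2) ^ (2 : ℕ) = 4 - (2 * x - 1) ^ 2 := by
    intro x hx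
    have hx0 : x ≠ 0 := ne_of_gt hx.1
    have hx1 : x - x ^ 2 ≠ 0 := by
      have : x * (1 - x) ≠ 0 := mul_ne_zero hx0 (by nlinarith [hx.2])
      intro hc; apply this; nlinarith
    rw [hh, div_eq_iff (pow_ne_zero _ hx1)]
    ring
  have h4 : (4 : ℝ) ^ (2 - 1 : ℕ) = 4 := by norm_num
  rw [h4]
  apply le_antisymm
  · apply csSup_le
    · exact (nonempty_Ioo.mpr one_pos).image _
    · rintro y ⟨x, hx, rfl⟩
      dsimp only; rw [key x hx]
      nlinarith [sq_nonneg (2 * x - 1)]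
  · apply le_csSup
    · refine ⟨4, ?_⟩
      rintro y ⟨x, hx, rfl⟩
      dsimp only; rw [key x hx]
      nlinarith [sq_nonneg (2 * x - 1)]
    · refine ⟨1/2, by norm_num, ?_⟩
      dsimp only; rw [key (1/2) (by norm_num)]
      norm_num
end
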